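/- Let G be a connected graph, C a basis of small cycles of G with cycle-edge incidence matrix F_C (entries ±1 by orientation, 0 if edge not in cycle), and T a set of N_G - h_G edges of G, where N_G is the number of edges and h_G the first Betti number. Let F_C(T) be the square matrix obtained from F_C by deleting the columns labelled by T. Then det F_C(T) = ±1 if T is a spanning tree of G, and det F_C(T) = 0 otherwise. -/

import Mathlib

open scoped Classical

noncomputable section

/-- A finite multigraph with edges labelled by `Fin N`, each edge oriented
from its source `s e` to its target `t e`. -/
structure FinEdgeGraph (N : ℕ) where
  V : Type
  [fV : Fintype V]
  [dV : DecidableEq V]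
  s : Fin N → V
  t : Fin N → V

namespace FinEdgeGraph

variable {N : ℕ}

instance (G : FinEdgeGraph N) : Fintype G.V := G.fV
instance (G : FinEdgeGraph N) : DecidableEq G.V := G.dV

/-- The loop number (first Betti number) `h_G = N_G - |V| + 1` of a connected graph. -/
def loopNumber (G : FinEdgeGraph N) : ℕ := N + 1 - Fintype.card G.V

/-- Adjacency of two vertices through an edge of the edge set `S` (ignoring orientation). -/
def Adj (G : FinEdgeGraph N) (S : Finset (Fin N)) (u v : G.V) : Prop :=
  ∃ e ∈ S, (G.s e = u ∧ G.t e = v) ∨ (G.s e = v ∧ G.t e = u)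

/-- The subgraph with edge set `S` (and all vertices) is connected. -/
def ConnectedOn (G : FinEdgeGraph N) (S : Finset (Fin N)) : Prop :=
  ∀ u v : G.V, Relation.ReflTransGen (G.Adj S) u v

def IsConnected (G : FinEdgeGraph N) : Prop := G.ConnectedOn Finset.univ

/-- A spanning tree: a connected spanning subgraph with `|V| - 1` edges. -/
def IsSpanningTree (G : FinEdgeGraph N) (T : Finset (Fin N)) : Prop :=
  G.ConnectedOn T ∧ T.card + 1 = Fintype.card G.V

/-- The dual graph polynomial `φ_G = Σ_{spanning trees T} Π_{e ∈ T} α_e`. -/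
def dualPoly (G : FinEdgeGraph N) : MvPolynomial (Fin N) ℤ :=
  ∑ T ∈ Finset.univ.filter (fun T => G.IsSpanningTree T), ∏ e ∈ T, MvPolynomial.X e

/-- The Kirchhoff graph polynomial `Ψ_G = Σ_{spanning trees T} Π_{e ∉ T} α_e`. -/
def graphPoly (G : FinEdgeGraph N) : MvPolynomial (Fin N) ℤ :=
  ∑ T ∈ Finset.univ.filter (fun T => G.IsSpanningTree T), ∏ e ∈ Tᶜ, MvPolynomial.X e

/-- The boundary map `∂ : ℤ^E → ℤ^V`, `e ↦ (target e) - (source e)`. -/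
def bdry (G : FinEdgeGraph N) (x : Fin N → ℤ) : G.V → ℤ := fun v =>
  ∑ e, x e * ((if G.t e = v then 1 else 0) - (if G.s e = v then 1 else 0))

/-- `c ∈ ℤ^E` is (the pre-image of) an oriented cycle (topological loop):
its support is a cyclically ordered set of edges through distinct vertices,
with entry `+1` or `-1` according to whether the orientation of the edge
agrees with that of the cycle. -/
def IsCycleVector (G : FinEdgeGraph N) (c : Fin N → ℤ) : Prop :=
  ∃ (n : ℕ) (_ : 0 < n) (f : Fin n → Fin N) (g : Fin n → G.V),
    Function.Injective f ∧ Function.Injective g ∧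
    (∀ i : Fin n,
      (c (f i) = 1 ∧ G.s (f i) = g i ∧ G.t (f i) = g ⟨(i.val + 1) % n, Nat.mod_lt _ (Nat.lt_of_le_of_lt (Nat.zero_le _) i.isLt)⟩) ∨
      (c (f i) = -1 ∧ G.t (f i) = g i ∧ G.s (f i) = g ⟨(i.val + 1) % n, Nat.mod_lt _ (Nat.lt_of_le_of_lt (Nat.zero_le _) i.isLt)⟩)) ∧
    (∀ e : Fin N, e ∉ Set.range f → c e = 0)

/-- A basis of small cycles: (i) each `C i` is an oriented cycle, (ii) the `C i`
generate `H_1(G,ℤ) = ker ∂`, and (iii) if `C i + Σ_{j ≠ i} λ_j C j = μ c` with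
`c ∈ H_1(G,ℤ)` and `μ ≠ 0`, then `μ = ±1`. -/
def IsSmallCycleBasis (G : FinEdgeGraph N) (C : Fin G.loopNumber → Fin N → ℤ) : Prop :=
  (∀ i, G.IsCycleVector (C i)) ∧
  (∀ c : Fin N → ℤ, G.bdry c = 0 → c ∈ Submodule.span ℤ (Set.range C)) ∧
  (∀ (i : Fin G.loopNumber) (lam : Fin G.loopNumber → ℤ) (c : Fin N → ℤ) (μ : ℤ),
    G.bdry c = 0 → μ ≠ 0 →
    C i + ∑ j ∈ Finset.univ.erase i, lam j • C j = μ • c → μ = 1 ∨ μ = -1)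

/-- `G` has a cycle (closed walk through distinct edges and distinct vertices)
of length `n`. -/
def HasCycleOfLength (G : FinEdgeGraph N) (n : ℕ) : Prop :=
  ∃ (f : Fin n → Fin N) (g : Fin n → G.V),
    Function.Injective f ∧ Function.Injective g ∧
    ∀ i : Fin n, (G.s (f i) = g i ∧ G.t (f i) = g ⟨(i.val + 1) % n, Nat.mod_lt _ (Nat.lt_of_le_of_lt (Nat.zero_le _) i.isLt)⟩) ∨
      (G.t (f i) = g i ∧ G.s (f i) = g ⟨(i.val + 1) % n, Nat.mod_lt _ (Nat.lt_of_le_of_lt (Nat.zero_le _) i.isLt)⟩)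

/-- The matrix `L_G = [[Δ(α), F^t], [-F, 0]]`, where `F` is the cycle-edge
incidence matrix of a basis of small cycles `C`. -/
def LG (G : FinEdgeGraph N) (C : Fin G.loopNumber → Fin N → ℤ) :
    Matrix (Fin (N + G.loopNumber)) (Fin (N + G.loopNumber)) (MvPolynomial (Fin N) ℤ) :=
  Matrix.reindex finSumFinEquiv finSumFinEquiv
    (Matrix.fromBlocks
      (Matrix.diagonal fun e => MvPolynomial.X e)
      (Matrix.of fun e i => ((C i e : ℤ) : MvPolynomial (Fin N) ℤ))
      (Matrix.of fun i e => ((-(C i e) : ℤ) : MvPolynomial (Fin N) ℤ))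
      (0 : Matrix (Fin G.loopNumber) (Fin G.loopNumber) (MvPolynomial (Fin N) ℤ)))

end FinEdgeGraph

/-- The determinant of the minor of `M` obtained by deleting the rows indexed by `I`
and the columns indexed by `J`, with rows and columns of the minor enumerated in
increasing order (and `0` if the sizes do not match). -/
def minorDet {R : Type} [CommRing R] {m : ℕ}
    (M : Matrix (Fin m) (Fin m) R) (I J : Finset (Fin m)) : R :=
  if h : (Iᶜ : Finset (Fin m)).card = (Jᶜ : Finset (Fin m)).card then
    Matrix.det (Matrix.of fun i j : Fin (Iᶜ : Finset (Fin m)).card =>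
      M (((Iᶜ : Finset (Fin m)).orderIsoOfFin rfl i).1)
        (((Jᶜ : Finset (Fin m)).orderIsoOfFin h.symm j).1))
  else 0

namespace FinEdgeGraph

/-- The dual Dodgson polynomial `φ^{I,J}_{G,K} = det L_G(I,J)|_{α_K = 0}`:
the determinant of `L_G` with the rows labelled by the edges of `I` and the
columns labelled by the edges of `J` deleted, and the variables of `K` set to zero. -/
def dualDodgson {N : ℕ} (G : FinEdgeGraph N) (C : Fin G.loopNumber → Fin N → ℤ)
    (I J K : Finset (Fin N)) : MvPolynomial (Fin N) ℤ :=
  MvPolynomial.aeval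
    (fun e => if e ∈ K then (0 : MvPolynomial (Fin N) ℤ) else MvPolynomial.X e)
    (minorDet (G.LG C) (I.image (Fin.castAdd G.loopNumber)) (J.image (Fin.castAdd G.loopNumber)))

/-- Edges `e1 e2 e3` form a triangle on distinct vertices `u v w`, with the
edges oriented consistently along the triangle. -/
def HasOrientedTriangle (G : FinEdgeGraph N) (e1 e2 e3 : Fin N) : Prop :=
  ∃ u v w : G.V, u ≠ v ∧ v ≠ w ∧ u ≠ w ∧
    G.s e1 = u ∧ G.t e1 = v ∧ G.s e2 = v ∧ G.t e2 = w ∧ G.s e3 = w ∧ G.t e3 = u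

/-- Edges `e1 e2 e3 e4` bound a 4-face (a 4-cycle on distinct vertices), with
`e1, e2` adjacent and `e1, e3` opposite, oriented consistently along the face. -/
def HasOrientedQuadFace (G : FinEdgeGraph N) (e1 e2 e3 e4 : Fin N) : Prop :=
  ∃ p q r s : G.V, p ≠ q ∧ p ≠ r ∧ p ≠ s ∧ q ≠ r ∧ q ≠ s ∧ r ≠ s ∧
    G.s e1 = p ∧ G.t e1 = q ∧ G.s e2 = q ∧ G.t e2 = r ∧
    G.s e3 = r ∧ G.t e3 = s ∧ G.s e4 = s ∧ G.t e4 = p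

end FinEdgeGraph

/-- `[f_1,…,f_k]_q`: the number of `F_q`-rational common zeros in `F^n` of a finite
set of integer polynomials (coefficients reduced to the finite field `F`). -/
def countZeros (F : Type) [Field F] [Fintype F] {n : ℕ}
    (S : Finset (MvPolynomial (Fin n) ℤ)) : ℕ :=
  Nat.card {x : Fin n → F // ∀ p ∈ S, MvPolynomial.aeval x p = 0}

end
/-!
Write `F` for the matrix `F_C(T)`, whose columns are the edges outside `T`.

If `T` is a spanning tree, each edge `e ∉ T` closes a fundamental cycle `z_e`: the edge `e`
followed by the path in `T` joining its endpoints. Expanding `z_e` in the generating set `C`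
and reading off the coordinates outside `T` gives an integer matrix `Λ` with `Λ F = 1`, so
`det F` is a unit of `ℤ`.

Otherwise `T`, which has `|V| - 1` edges in a connected graph, is disconnected, and the
indicator of the vertex set of one of its components defines a cut vector that vanishes on
`T` but not on some edge crossing the cut. Cycles are orthogonal to cuts, so the restriction
of the cut vector to the edges outside `T` is a nonzero kernel vector of `F`, and `det F = 0`.
-/

lemma mk_succ_mod_eq_finRotate {n : ℕ} (i : Fin n) :
    (⟨(i.val + 1) % n, Nat.mod_lt _ (Nat.lt_of_le_of_lt (Nat.zero_le _) i.isLt)⟩ : Fin n) =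
      finRotate n i := by
  cases n with
  | zero => exact i.elim0
  | succ n => ext; simp [Fin.val_add]

namespace FinEdgeGraph

variable {N : ℕ}

section Boundary

variable (G : FinEdgeGraph N)

lemma bdry_add (x y : Fin N → ℤ) : G.bdry (x + y) = G.bdry x + G.bdry y := by
  funext v
  simp only [bdry, Pi.add_apply, add_mul, Finset.sum_add_distrib]

lemma bdry_single (e₀ : Fin N) (a : ℤ) :
    G.bdry (Pi.single e₀ a) = fun v =>
      a * ((if G.t e₀ = v then 1 else 0) - (if G.s e₀ = v then 1 else 0)) := by
  funext v
  simp [bdry, Pi.single_apply, Finset.sum_ite_eq']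

end Boundary

lemma IsCycleVector.bdry_eq_zero {G : FinEdgeGraph N} {c : Fin N → ℤ}
    (h : G.IsCycleVector c) : G.bdry c = 0 := by
  obtain ⟨n, -, f, g, hf, -, horient, hsupp⟩ := h
  funext v
  have hsupport : G.bdry c v = ∑ i, c (f i) *
      ((if G.t (f i) = v then 1 else 0) - (if G.s (f i) = v then 1 else 0)) := by
    rw [bdry, ← Finset.sum_subset (Finset.subset_univ (Finset.univ.image f)), Finset.sum_image]
    · exact fun i _ j _ hij => hf hij
    · intro e _ he
      rw [hsupp e (by simpa using he), zero_mul]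
  -- the edge `f i` contributes `δ_{g (i + 1)} - δ_{g i}`, so the sum telescopes around the cycle
  have hstep : ∀ i, c (f i) *
      ((if G.t (f i) = v then 1 else 0) - (if G.s (f i) = v then 1 else 0)) =
      (if g (finRotate n i) = v then 1 else 0) - (if g i = v then 1 else 0) := by
    intro i
    rw [← mk_succ_mod_eq_finRotate]
    rcases horient i with ⟨h1, h2, h3⟩ | ⟨h1, h2, h3⟩ <;> rw [h1, h2, h3] <;> ring
  rw [hsupport, Finset.sum_congr rfl fun i _ => hstep i, Finset.sum_sub_distrib,
    Equiv.sum_comp (finRotate n) fun i => if g i = v then (1 : ℤ) else 0, sub_self, Pi.zero_apply]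

section Paths

variable {G : FinEdgeGraph N} {S : Finset (Fin N)}

lemma adj_symm {u v : G.V} (h : G.Adj S u v) : G.Adj S v u := by
  obtain ⟨e, he, h' | h'⟩ := h
  exacts [⟨e, he, Or.inr h'⟩, ⟨e, he, Or.inl h'⟩]

lemma exists_bdry_eq_of_reflTransGen {u v : G.V} (h : Relation.ReflTransGen (G.Adj S) u v) :
    ∃ p : Fin N → ℤ, (∀ e ∉ S, p e = 0) ∧
      G.bdry p = fun w => (if v = w then 1 else 0) - (if u = w then 1 else 0) := by
  induction h with
  | refl => exact ⟨0, fun _ _ => rfl, by funext w; simp [bdry]⟩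
  | tail _ hadj ih =>
    obtain ⟨p, hpS, hp⟩ := ih
    obtain ⟨e₀, he₀, horient⟩ := hadj
    have hsupp (a : ℤ) : ∀ e ∉ S, (p + (Pi.single e₀ a : Fin N → ℤ)) e = 0 := fun e he => by
      rw [Pi.add_apply, hpS e he, Pi.single_apply, if_neg (ne_of_mem_of_not_mem he₀ he).symm,
        add_zero]
    rcases horient with ⟨hs, ht⟩ | ⟨hs, ht⟩ <;>
      [refine ⟨_, hsupp 1, ?_⟩; refine ⟨_, hsupp (-1), ?_⟩] <;>
    · rw [bdry_add, hp, bdry_single, hs, ht]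
      funext w
      simp only [Pi.add_apply]
      ring

/-- The fundamental cycle of the edge `e₀` with respect to `T`. -/
lemma exists_bdry_eq_zero_of_connectedOn {T : Finset (Fin N)} (hT : G.ConnectedOn T)
    (e₀ : Fin N) :
    ∃ z : Fin N → ℤ, G.bdry z = 0 ∧ ∀ e ∉ T, z e = (Pi.single e₀ 1 : Fin N → ℤ) e := by
  obtain ⟨p, hpT, hp⟩ := exists_bdry_eq_of_reflTransGen (hT (G.t e₀) (G.s e₀))
  refine ⟨Pi.single e₀ 1 + p, ?_, fun e he => by rw [Pi.add_apply, hpT e he, add_zero]⟩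
  rw [bdry_add, hp, bdry_single]
  funext w
  simp only [Pi.add_apply, Pi.zero_apply]
  ring

end Paths

section Cuts

variable (G : FinEdgeGraph N)

def cutVector (A : Finset G.V) (e : Fin N) : ℤ :=
  (if G.t e ∈ A then 1 else 0) - (if G.s e ∈ A then 1 else 0)

variable {G}

lemma cutVector_eq_zero_iff {A : Finset G.V} {e : Fin N} :
    G.cutVector A e = 0 ↔ (G.s e ∈ A ↔ G.t e ∈ A) := by
  unfold cutVector
  split_ifs <;> simp_all

lemma sum_mul_cutVector_eq_zero {c : Fin N → ℤ} (hc : G.bdry c = 0) (A : Finset G.V) :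
    ∑ e, c e * G.cutVector A e = 0 := by
  have hcut : ∀ e, G.cutVector A e =
      ∑ w ∈ A, ((if G.t e = w then 1 else 0) - (if G.s e = w then 1 else 0)) := by
    intro e
    simp [cutVector, Finset.sum_sub_distrib, Finset.sum_ite_eq]
  simp_rw [hcut, Finset.mul_sum]
  rw [Finset.sum_comm]
  exact Finset.sum_eq_zero fun w _ => congrFun hc w

lemma mem_of_reflTransGen_of_cutVector_eq_zero {S : Finset (Fin N)} {A : Finset G.V}
    (hA : ∀ e ∈ S, G.cutVector A e = 0) {u v : G.V}
    (h : Relation.ReflTransGen (G.Adj S) u v) (hu : u ∈ A) : v ∈ A := by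
  induction h with
  | refl => exact hu
  | tail _ hadj ih =>
    obtain ⟨e, he, ⟨rfl, rfl⟩ | ⟨rfl, rfl⟩⟩ := hadj
    · exact (cutVector_eq_zero_iff.mp (hA e he)).mp ih
    · exact (cutVector_eq_zero_iff.mp (hA e he)).mpr ih

lemma exists_cutVector_of_not_connectedOn (hG : G.IsConnected) {T : Finset (Fin N)}
    (hT : ¬ G.ConnectedOn T) :
    ∃ A : Finset G.V, (∀ e ∈ T, G.cutVector A e = 0) ∧ ∃ e, G.cutVector A e ≠ 0 := by
  obtain ⟨u, v, huv⟩ : ∃ u v, ¬ Relation.ReflTransGen (G.Adj T) u v := by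
    simpa [ConnectedOn] using hT
  set A := Finset.univ.filter (Relation.ReflTransGen (G.Adj T) u)
  have hAT : ∀ e ∈ T, G.cutVector A e = 0 := by
    intro e he
    have hadj : G.Adj T (G.s e) (G.t e) := ⟨e, he, Or.inl ⟨rfl, rfl⟩⟩
    simp only [cutVector_eq_zero_iff, A, Finset.mem_filter, Finset.mem_univ, true_and]
    exact ⟨fun h => h.tail hadj, fun h => h.tail (adj_symm hadj)⟩
  refine ⟨A, hAT, ?_⟩
  by_contra! hA
  have hvA := mem_of_reflTransGen_of_cutVector_eq_zero (fun e _ => hA e) (hG u v)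
    (Finset.mem_filter.mpr ⟨Finset.mem_univ u, .refl⟩)
  exact huv (by simpa [A] using hvA)

end Cuts

section Counting

variable {G : FinEdgeGraph N} {S : Finset (Fin N)}

lemma adj_eq_toRel (S : Finset (Fin N)) :
    G.Adj S = Sym2.ToRel ((fun e => s(G.s e, G.t e)) '' S) := by
  ext u v
  simp only [Adj, Sym2.toRel_prop, Set.mem_image, Finset.mem_coe, Sym2.eq_iff]

lemma card_le_card_add_one_of_connectedOn (hS : G.ConnectedOn S) :
    Fintype.card G.V ≤ S.card + 1 := by
  rcases isEmpty_or_nonempty G.V with hV | hV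
  · simp
  set H := SimpleGraph.fromEdgeSet ((fun e => s(G.s e, G.t e)) '' (S : Set (Fin N)))
  have hH : H.Connected := by
    refine (SimpleGraph.connected_iff _).mpr ⟨fun u v => ?_, hV⟩
    rw [SimpleGraph.reachable_fromEdgeSet_eq_reflTransGen_toRel, ← adj_eq_toRel]
    exact hS u v
  calc Fintype.card G.V = Nat.card G.V := Nat.card_eq_fintype_card.symm
    _ ≤ Nat.card H.edgeSet + 1 := hH.card_vert_le_card_edgeSet_add_one
    _ ≤ S.card + 1 := by
      rw [SimpleGraph.edgeSet_fromEdgeSet, Nat.card_coe_set_eq, ← Set.ncard_coe_finset S]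
      gcongr
      exact (Set.ncard_le_ncard Set.sdiff_subset (Set.toFinite _)).trans
        (Set.ncard_image_le (Set.toFinite _))

end Counting

section CycleMinor

variable {ι : Type*} [Fintype ι] [DecidableEq ι] {G : FinEdgeGraph N} {C : ι → Fin N → ℤ}
  {T : Finset (Fin N)}

lemma det_cycleMinor_eq_one_or_neg_one
    (hC : ∀ c : Fin N → ℤ, G.bdry c = 0 → c ∈ Submodule.span ℤ (Set.range C))
    (hT : G.ConnectedOn T) (φ : ι ≃ (Tᶜ : Finset (Fin N))) :
    (Matrix.of fun i j => C i (φ j)).det = 1 ∨ (Matrix.of fun i j => C i (φ j)).det = -1 := by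
  choose z hz_bdry hz using fun j => exists_bdry_eq_zero_of_connectedOn hT (φ j : Fin N)
  choose Λ hΛ using fun j => (Submodule.mem_span_range_iff_exists_fun ℤ).mp (hC _ (hz_bdry j))
  have hinv : Matrix.of Λ * Matrix.of (fun i j => C i (φ j)) = 1 := by
    ext j k
    have hjk := congrFun (hΛ j) (φ k)
    rw [hz j _ (Finset.mem_compl.mp (φ k).2), Finset.sum_apply] at hjk
    simpa [Matrix.mul_apply, Matrix.one_apply, Pi.single_apply, φ.injective.eq_iff, eq_comm]
      using hjk
  exact Int.isUnit_iff.mp (Matrix.isUnit_det_of_left_inverse hinv)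

lemma det_cycleMinor_eq_zero (hC : ∀ i, G.bdry (C i) = 0) (hG : G.IsConnected)
    (hT : ¬ G.ConnectedOn T) (φ : ι ≃ (Tᶜ : Finset (Fin N))) :
    (Matrix.of fun i j => C i (φ j)).det = 0 := by
  obtain ⟨A, hAT, e₀, he₀⟩ := exists_cutVector_of_not_connectedOn hG hT
  have he₀T : e₀ ∈ Tᶜ := Finset.mem_compl.mpr fun h => he₀ (hAT e₀ h)
  refine Matrix.exists_mulVec_eq_zero_iff.mp ⟨fun j => G.cutVector A (φ j), ?_, ?_⟩
  · intro h
    apply he₀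
    simpa using congrFun h (φ.symm ⟨e₀, he₀T⟩)
  · funext i
    calc ∑ j, C i (φ j) * G.cutVector A (φ j) = ∑ e ∈ Tᶜ, C i e * G.cutVector A e := by
          rw [φ.sum_comp fun e => C i e * G.cutVector A e,
            Finset.sum_coe_sort Tᶜ fun e => C i e * G.cutVector A e]
      _ = ∑ e, C i e * G.cutVector A e :=
          Finset.sum_subset (Finset.subset_univ _) fun e _ he => by
            rw [hAT e (by simpa using he), mul_zero]
      _ = 0 := sum_mul_cutVector_eq_zero (hC i) A

end CycleMinor

end FinEdgeGraph

theorem statement0_general (N : ℕ) (G : FinEdgeGraph N) (hconn : G.IsConnected)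
    (C : Fin G.loopNumber → Fin N → ℤ) (hC : G.IsSmallCycleBasis C)
    (T : Finset (Fin N)) :
    ∀ hc : (Tᶜ : Finset (Fin N)).card = G.loopNumber,
      (G.IsSpanningTree T →
        Matrix.det (Matrix.of fun i j : Fin G.loopNumber =>
            C i (((Tᶜ : Finset (Fin N)).orderIsoOfFin hc j).1)) = 1 ∨
        Matrix.det (Matrix.of fun i j : Fin G.loopNumber =>
            C i (((Tᶜ : Finset (Fin N)).orderIsoOfFin hc j).1)) = -1) ∧
      (¬ G.IsSpanningTree T →
        Matrix.det (Matrix.of fun i j : Fin G.loopNumber =>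
            C i (((Tᶜ : Finset (Fin N)).orderIsoOfFin hc j).1)) = 0) := by
  intro hc
  have hcard : T.card + 1 = Fintype.card G.V := by
    have hV := FinEdgeGraph.card_le_card_add_one_of_connectedOn hconn
    have hTc := Finset.card_compl T
    have hTN := Finset.card_le_univ T
    simp only [FinEdgeGraph.loopNumber, Finset.card_univ, Fintype.card_fin] at hV hTc hTN hc
    omega
  exact ⟨fun hspan => FinEdgeGraph.det_cycleMinor_eq_one_or_neg_one hC.2.1 hspan.1
      ((Tᶜ).orderIsoOfFin hc).toEquiv,
    fun hnot => FinEdgeGraph.det_cycleMinor_eq_zero (fun i => (hC.1 i).bdry_eq_zero) hconn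
      (fun hT => hnot ⟨hT, hcard⟩) ((Tᶜ).orderIsoOfFin hc).toEquiv⟩

/-- For a connected graph `G`, a basis of small cycles `C` with
cycle-edge incidence matrix `F_C = C`, and a set `T` of `N_G - h_G` edges, the
determinant of `F_C(T)` (columns labelled by `T` deleted) is `±1` if `T` is a
spanning tree and `0` otherwise. -/
theorem statement0 (N : ℕ) (G : FinEdgeGraph N) [Nonempty G.V] (hconn : G.IsConnected)
    (C : Fin G.loopNumber → Fin N → ℤ) (hC : G.IsSmallCycleBasis C)
    (T : Finset (Fin N)) (hT : T.card = N - G.loopNumber) :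
    ∀ hc : (Tᶜ : Finset (Fin N)).card = G.loopNumber,
      (G.IsSpanningTree T →
        Matrix.det (Matrix.of fun i j : Fin G.loopNumber =>
            C i (((Tᶜ : Finset (Fin N)).orderIsoOfFin hc j).1)) = 1 ∨
        Matrix.det (Matrix.of fun i j : Fin G.loopNumber =>
            C i (((Tᶜ : Finset (Fin N)).orderIsoOfFin hc j).1)) = -1) ∧
      (¬ G.IsSpanningTree T →
        Matrix.det (Matrix.of fun i j : Fin G.loopNumber =>
            C i (((Tᶜ : Finset (Fin N)).orderIsoOfFin hc j).1)) = 0) :=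
  statement0_general N G hconn C hC T
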